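/- arXiv:1708.03829 — 3 statements merged into one kernel-verified Lean document; each statement's English description precedes it below -/
import Mathlib

section
/- Suppose H is twice continuously differentiable, π is continuously differentiable, the identity H_u(t, x, λ, π(t, x, λ, μ), μ) = 0 holds for all (t, x, λ, μ), and H_{uu} evaluated at (t, x, λ, π(t, x, λ, μ), μ) is invertible. Then the second partial derivative of the regular Hamiltonian with respect to the state satisfies Ĥ_{xx}(t, x, λ, μ) = H_{xx}(t, x, λ, π(t, x, λ, μ), μ) − π_x(t, x, λ, μ)ᵀ · H_{uu}(t, x, λ, π(t, x, λ, μ), μ) · π_x(t, x, λ, μ). -/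
/-!
Along the graph `z ↦ (z, P z)` of a stationary feedback law the first derivative of
`z ↦ F (z, P z)` is `F_x` alone (envelope theorem), so its derivative is
`F_xx + F_ux P_x`. Differentiating the stationarity condition `F_u (z, P z) = 0` gives
`F_xu + F_uu P_x = 0`, and symmetry of the second derivative turns the cross term
`F_ux P_x` into `-P_xᵀ F_uu P_x`.
-/

section SecondDerivative

variable {E G W : Type*} [NormedAddCommGroup E] [NormedSpace ℝ E]
  [NormedAddCommGroup G] [NormedSpace ℝ G] [NormedAddCommGroup W] [NormedSpace ℝ W]

theorem fderiv_fderiv_apply_comp {F : E → W} (hF : ContDiff ℝ 2 F) {c : G → E}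
    {C : G →L[ℝ] E} {x : G} (hc : HasFDerivAt c C x) (e : E) (v : G) :
    fderiv ℝ (fun y => fderiv ℝ F (c y) e) x v = fderiv ℝ (fderiv ℝ F) (c x) (C v) e := by
  have hF' : HasFDerivAt (fderiv ℝ F) (fderiv ℝ (fderiv ℝ F) (c x)) (c x) :=
    ((hF.fderiv_right (m := 1) le_rfl).differentiable one_ne_zero (c x)).hasFDerivAt
  have h : HasFDerivAt (fun y => fderiv ℝ F (c y) e)
      ((ContinuousLinearMap.apply ℝ W e).comp ((fderiv ℝ (fderiv ℝ F) (c x)).comp C)) x :=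
    (ContinuousLinearMap.apply ℝ W e).hasFDerivAt.comp x (hF'.comp x hc)
  rw [h.fderiv]
  rfl

theorem fderiv_fderiv_comp_apply {F : E → W} (hF : ContDiff ℝ 2 F) {c : G → E}
    {C : G →L[ℝ] E} (hc : ∀ y, HasFDerivAt c C y) (x v w : G) :
    fderiv ℝ (fun y => fderiv ℝ (fun z => F (c z)) y w) x v
      = fderiv ℝ (fderiv ℝ F) (c x) (C v) (C w) := by
  have hfirst : (fun y => fderiv ℝ (fun z => F (c z)) y w) = fun y => fderiv ℝ F (c y) (C w) :=
    funext fun y => by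
      have h : HasFDerivAt (fun z => F (c z)) ((fderiv ℝ F (c y)).comp C) y :=
        (hF.differentiable two_ne_zero (c y)).hasFDerivAt.comp y (hc y)
      rw [h.fderiv]
      rfl
  rw [hfirst, fderiv_fderiv_apply_comp hF (hc x)]

end SecondDerivative

section StationaryFeedback

variable {E U W : Type*} [NormedAddCommGroup E] [NormedSpace ℝ E]
  [NormedAddCommGroup U] [NormedSpace ℝ U] [NormedAddCommGroup W] [NormedSpace ℝ W]
  {F : E × U → W} {P : E → U}

theorem hasFDerivAt_graph (hP : Differentiable ℝ P) (x : E) :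
    HasFDerivAt (fun z => (z, P z)) ((ContinuousLinearMap.id ℝ E).prod (fderiv ℝ P x)) x :=
  (hasFDerivAt_id x).prodMk (hP x).hasFDerivAt

theorem fderiv_apply_zero_prod_eq_zero_of_stationary (hF : Differentiable ℝ F) {x : E}
    (hstat : fderiv ℝ (fun u => F (x, u)) (P x) = 0) (c : U) :
    fderiv ℝ F (x, P x) (0, c) = 0 := by
  have h : HasFDerivAt (fun u => F (x, u)) ((fderiv ℝ F (x, P x)).comp
      (ContinuousLinearMap.inr ℝ E U)) (P x) :=
    (hF (x, P x)).hasFDerivAt.comp (P x) (hasFDerivAt_prodMk_right x (P x))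
  rw [h.fderiv] at hstat
  exact congr($hstat c)

theorem fderiv_comp_graph_apply_of_stationary (hF : Differentiable ℝ F)
    (hP : Differentiable ℝ P) {x : E} (hstat : fderiv ℝ (fun u => F (x, u)) (P x) = 0)
    (w : E) :
    fderiv ℝ (fun z => F (z, P z)) x w = fderiv ℝ F (x, P x) (w, 0) := by
  have h : HasFDerivAt (fun z => F (z, P z)) ((fderiv ℝ F (x, P x)).comp
      ((ContinuousLinearMap.id ℝ E).prod (fderiv ℝ P x))) x :=
    (hF (x, P x)).hasFDerivAt.comp x (hasFDerivAt_graph hP x)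
  rw [h.fderiv]
  calc fderiv ℝ F (x, P x) (w, fderiv ℝ P x w)
      = fderiv ℝ F (x, P x) ((w, 0) + (0, fderiv ℝ P x w)) := by simp
    _ = fderiv ℝ F (x, P x) (w, 0) := by
      rw [map_add, fderiv_apply_zero_prod_eq_zero_of_stationary hF hstat, add_zero]

theorem fderiv_fderiv_apply_graph_zero_prod_of_stationary (hF : ContDiff ℝ 2 F)
    (hP : Differentiable ℝ P) (hstat : ∀ x, fderiv ℝ (fun u => F (x, u)) (P x) = 0)
    (x d : E) (c : U) :
    fderiv ℝ (fderiv ℝ F) (x, P x) (d, fderiv ℝ P x d) (0, c) = 0 := by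
  have hzero : (fun y => fderiv ℝ F (y, P y) (0, c)) = fun _ => 0 := funext fun y =>
    fderiv_apply_zero_prod_eq_zero_of_stationary (hF.differentiable two_ne_zero) (hstat y) c
  have h := fderiv_fderiv_apply_comp hF (hasFDerivAt_graph hP x) (0, c) d
  rw [hzero] at h
  simpa using h.symm

theorem fderiv_fderiv_comp_graph_apply_of_stationary (hF : ContDiff ℝ 2 F)
    (hP : Differentiable ℝ P) (hstat : ∀ x, fderiv ℝ (fun u => F (x, u)) (P x) = 0)
    (x v w : E) :
    fderiv ℝ (fun y => fderiv ℝ (fun z => F (z, P z)) y w) x v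
      = fderiv ℝ (fderiv ℝ F) (x, P x) (v, 0) (w, 0)
        - fderiv ℝ (fderiv ℝ F) (x, P x) (0, fderiv ℝ P x v) (0, fderiv ℝ P x w) := by
  set B := fderiv ℝ (fderiv ℝ F) (x, P x)
  set P' := fderiv ℝ P x
  have hsymm : IsSymmSndFDerivAt ℝ F (x, P x) := hF.contDiffAt.isSymmSndFDerivAt (by simp)
  have hfirst : (fun y => fderiv ℝ (fun z => F (z, P z)) y w)
      = fun y => fderiv ℝ F (y, P y) (w, 0) := funext fun y =>
    fderiv_comp_graph_apply_of_stationary (hF.differentiable two_ne_zero) hP (hstat y) w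
  have hcross : B (0, P' v) (w, 0) = -B (0, P' v) (0, P' w) := by
    have h := fderiv_fderiv_apply_graph_zero_prod_of_stationary hF hP hstat x w (P' v)
    rw [show ((w, P' w) : E × U) = (w, 0) + (0, P' w) by simp, map_add, _root_.add_apply,
      hsymm (w, 0), hsymm (0, P' w)] at h
    exact eq_neg_of_add_eq_zero_left h
  calc fderiv ℝ (fun y => fderiv ℝ (fun z => F (z, P z)) y w) x v
      = B (v, P' v) (w, 0) := by
        rw [hfirst]
        exact fderiv_fderiv_apply_comp hF (hasFDerivAt_graph hP x) _ v
    _ = B (v, 0) (w, 0) + B (0, P' v) (w, 0) := by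
        rw [← _root_.add_apply, ← map_add]
        simp
    _ = B (v, 0) (w, 0) - B (0, P' v) (0, P' w) := by rw [hcross, sub_eq_add_neg]

end StationaryFeedback

theorem stmt4_general (n m : ℕ)
    (H : ℝ → (Fin n → ℝ) → (Fin n → ℝ) → (Fin m → ℝ) → ℝ → ℝ)
    (pi : ℝ → (Fin n → ℝ) → (Fin n → ℝ) → ℝ → (Fin m → ℝ))
    (hH : ContDiff ℝ 2
      (fun p : ℝ × (Fin n → ℝ) × (Fin n → ℝ) × (Fin m → ℝ) × ℝ =>
        H p.1 p.2.1 p.2.2.1 p.2.2.2.1 p.2.2.2.2))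
    (hpi : ContDiff ℝ 1
      (fun p : ℝ × (Fin n → ℝ) × (Fin n → ℝ) × ℝ =>
        pi p.1 p.2.1 p.2.2.1 p.2.2.2))
    (hstat : ∀ (t : ℝ) (x lam : Fin n → ℝ) (μ : ℝ),
      fderiv ℝ (fun u => H t x lam u μ) (pi t x lam μ) = 0)
    (t : ℝ) (x lam : Fin n → ℝ) (μ : ℝ)
    -- the Hessian of `H` in the control, evaluated at `(t, x, λ, π(t,x,λ,μ), μ)`
    (Huu : Matrix (Fin m) (Fin m) ℝ)
    (hHuu : Huu = Matrix.of fun i j =>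
      fderiv ℝ (fun u => fderiv ℝ (fun u' => H t x lam u' μ) u (Pi.single j 1))
        (pi t x lam μ) (Pi.single i 1))
    -- the Hessian of `H` in the state with the control frozen at `π(t,x,λ,μ)`
    (Hxx : Matrix (Fin n) (Fin n) ℝ)
    (hHxx : Hxx = Matrix.of fun i j =>
      fderiv ℝ
        (fun x1 => fderiv ℝ (fun x2 => H t x2 lam (pi t x lam μ) μ) x1 (Pi.single j 1))
        x (Pi.single i 1))
    -- the Hessian of the regular Hamiltonian `Ĥ` in the state
    (Hhatxx : Matrix (Fin n) (Fin n) ℝ)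
    (hHhatxx : Hhatxx = Matrix.of fun i j =>
      fderiv ℝ
        (fun x1 => fderiv ℝ (fun x2 => H t x2 lam (pi t x2 lam μ) μ) x1 (Pi.single j 1))
        x (Pi.single i 1))
    -- the Jacobian `π_x` (an `m × n` matrix)
    (pix : Matrix (Fin m) (Fin n) ℝ)
    (hpix : pix = Matrix.of fun i j =>
      fderiv ℝ (fun x' => pi t x' lam μ) x (Pi.single j 1) i) :
    Hhatxx = Hxx - pix.transpose * Huu * pix := by
  set F : (Fin n → ℝ) × (Fin m → ℝ) → ℝ := fun p => H t p.1 lam p.2 μ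
  set P : (Fin n → ℝ) → (Fin m → ℝ) := fun x' => pi t x' lam μ
  have hF : ContDiff ℝ 2 F :=
    hH.comp (contDiff_const.prodMk (contDiff_fst.prodMk (contDiff_const.prodMk
      (contDiff_snd.prodMk contDiff_const))))
  have hP : Differentiable ℝ P :=
    (hpi.comp (contDiff_const.prodMk (contDiff_id.prodMk
      (contDiff_const.prodMk contDiff_const)))).differentiable one_ne_zero
  set B := (fderiv ℝ (fderiv ℝ F) (x, P x)).toLinearMap₁₂
  set Bxx := B.compl₁₂ (LinearMap.inl ℝ _ _) (LinearMap.inl ℝ _ _)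
  set Buu := B.compl₁₂ (LinearMap.inr ℝ _ _) (LinearMap.inr ℝ _ _)
  set P' : (Fin n → ℝ) →ₗ[ℝ] Fin m → ℝ := (fderiv ℝ P x).toLinearMap
  have hHxx' : Hxx = LinearMap.toMatrix₂' ℝ Bxx := by
    rw [hHxx]
    ext i j
    exact fderiv_fderiv_comp_apply hF (fun y => hasFDerivAt_prodMk_left y (P x)) _ _ _
  have hHuu' : Huu = LinearMap.toMatrix₂' ℝ Buu := by
    rw [hHuu]
    ext i j
    exact fderiv_fderiv_comp_apply hF (fun u => hasFDerivAt_prodMk_right x u) _ _ _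
  have hHhatxx' : Hhatxx = LinearMap.toMatrix₂' ℝ (Bxx - Buu.compl₁₂ P' P') := by
    rw [hHhatxx]
    ext i j
    exact fderiv_fderiv_comp_graph_apply_of_stationary hF hP (fun x' => hstat t x' lam μ) _ _ _
  have hpix' : pix = LinearMap.toMatrix' P' := by
    rw [hpix]
    rfl
  rw [hHhatxx', hHxx', hHuu', hpix', map_sub, LinearMap.toMatrix₂'_compl₁₂]

/-- If `H` is twice continuously differentiable, `π` is continuously
differentiable, the stationarity condition `H_u ∘ π = 0` holds everywhere, and `H_{uu}`
evaluated along `π` is invertible, then the second partial derivative of the regular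
Hamiltonian `Ĥ(t,x,λ,μ) = H(t,x,λ,π(t,x,λ,μ),μ)` with respect to the state satisfies
`Ĥ_{xx} = H_{xx} − π_xᵀ · H_{uu} · π_x` (all evaluated along `π`). -/
theorem stmt4 (n m : ℕ)
    (H : ℝ → (Fin n → ℝ) → (Fin n → ℝ) → (Fin m → ℝ) → ℝ → ℝ)
    (pi : ℝ → (Fin n → ℝ) → (Fin n → ℝ) → ℝ → (Fin m → ℝ))
    (hH : ContDiff ℝ 2
      (fun p : ℝ × (Fin n → ℝ) × (Fin n → ℝ) × (Fin m → ℝ) × ℝ =>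
        H p.1 p.2.1 p.2.2.1 p.2.2.2.1 p.2.2.2.2))
    (hpi : ContDiff ℝ 1
      (fun p : ℝ × (Fin n → ℝ) × (Fin n → ℝ) × ℝ =>
        pi p.1 p.2.1 p.2.2.1 p.2.2.2))
    (hstat : ∀ (t : ℝ) (x lam : Fin n → ℝ) (μ : ℝ),
      fderiv ℝ (fun u => H t x lam u μ) (pi t x lam μ) = 0)
    (t : ℝ) (x lam : Fin n → ℝ) (μ : ℝ)
    -- the Hessian of `H` in the control, evaluated at `(t, x, λ, π(t,x,λ,μ), μ)`
    (Huu : Matrix (Fin m) (Fin m) ℝ)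
    (hHuu : Huu = Matrix.of fun i j =>
      fderiv ℝ (fun u => fderiv ℝ (fun u' => H t x lam u' μ) u (Pi.single j 1))
        (pi t x lam μ) (Pi.single i 1))
    -- the Hessian of `H` in the state with the control frozen at `π(t,x,λ,μ)`
    (Hxx : Matrix (Fin n) (Fin n) ℝ)
    (hHxx : Hxx = Matrix.of fun i j =>
      fderiv ℝ
        (fun x1 => fderiv ℝ (fun x2 => H t x2 lam (pi t x lam μ) μ) x1 (Pi.single j 1))
        x (Pi.single i 1))
    -- the Hessian of the regular Hamiltonian `Ĥ` in the state
    (Hhatxx : Matrix (Fin n) (Fin n) ℝ)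
    (hHhatxx : Hhatxx = Matrix.of fun i j =>
      fderiv ℝ
        (fun x1 => fderiv ℝ (fun x2 => H t x2 lam (pi t x2 lam μ) μ) x1 (Pi.single j 1))
        x (Pi.single i 1))
    -- the Jacobian `π_x` (an `m × n` matrix)
    (pix : Matrix (Fin m) (Fin n) ℝ)
    (hpix : pix = Matrix.of fun i j =>
      fderiv ℝ (fun x' => pi t x' lam μ) x (Pi.single j 1) i)
    (hinv : IsUnit Huu.det) :
    Hhatxx = Hxx - pix.transpose * Huu * pix :=
  stmt4_general n m H pi hH hpi hstat t x lam μ Huu hHuu Hxx hHxx Hhatxx hHhatxx pix hpix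
end

section
/- For the disk Hamiltonian H = (α/2)(z_a − r(φ − φ_a) − z_d)² + (βr²/2)φ̇² + Σ_{i=1}^n (γᵢ/2)uᵢ² + δ + Σ_{i=1}^n λᵢθ̇ᵢ + Σ_{i=1}^n λ_{n+i}uᵢ + λ_{2n+1}φ̇ + λ_{2n+2}κ, the partial derivative of H with respect to the control component uᵢ (1 ≤ i ≤ n) equals γᵢuᵢ + λ_{n+i} + λ_{2n+2}·mᵢ[(r cos φ + ζ_{i,3}(θᵢ))ζ′_{i,1}(θᵢ) − (r sin φ + ζ_{i,1}(θᵢ))ζ′_{i,3}(θᵢ)]/D. -/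
open Finset

/-- `Kᵢ` from the rolling-disk equations of motion: with rail coordinates `ζ_{i,1} = z1`,
`ζ_{i,3} = z3` evaluated at `θᵢ = ti`, velocity `θ̇ᵢ = tdi`, control `uᵢ = ui`, orientation
`φ` and its rate `φ̇ = φd`. -/
noncomputable def diskK (r g : ℝ) (z1 z3 : ℝ → ℝ) (ti tdi ui φ φd : ℝ) : ℝ :=
  (g + r * φd ^ 2) * (z3 ti * Real.sin φ - z1 ti * Real.cos φ)
    + (r * Real.cos φ + z3 ti) *
        (-(2 * φd * tdi * deriv z3 ti) + tdi ^ 2 * deriv (deriv z1) ti + ui * deriv z1 ti)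
    - (r * Real.sin φ + z1 ti) *
        (2 * φd * tdi * deriv z1 ti + tdi ^ 2 * deriv (deriv z3) ti + ui * deriv z3 ti)

/-- `Pᵢ = (r sin φ + ζ_{i,1})² + (r cos φ + ζ_{i,3})²`. -/
noncomputable def diskP (r : ℝ) (z1 z3 : ℝ → ℝ) (ti φ : ℝ) : ℝ :=
  (r * Real.sin φ + z1 ti) ^ 2 + (r * Real.cos φ + z3 ti) ^ 2

/-- `N = −rF₁ + Σ_{i=0}^n mᵢKᵢ`; the static part (index `0`) carries mass `m0`, rail
coordinates `z01, z03`, parameter `t0`, velocity `td0` and control `u0`. -/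
noncomputable def diskN {n : ℕ} (r g F1 m0 t0 td0 u0 φ φd : ℝ) (z01 z03 : ℝ → ℝ)
    (m : Fin n → ℝ) (z1 z3 : Fin n → ℝ → ℝ) (θ θd u : Fin n → ℝ) : ℝ :=
  -(r * F1) + m0 * diskK r g z01 z03 t0 td0 u0 φ φd
    + ∑ i, m i * diskK r g (z1 i) (z3 i) (θ i) (θd i) (u i) φ φd

/-- `D = d₂ + Σ_{i=0}^n mᵢPᵢ`. -/
noncomputable def diskD {n : ℕ} (r d2 m0 t0 φ : ℝ) (z01 z03 : ℝ → ℝ)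
    (m : Fin n → ℝ) (z1 z3 : Fin n → ℝ → ℝ) (θ : Fin n → ℝ) : ℝ :=
  d2 + m0 * diskP r z01 z03 t0 φ + ∑ i, m i * diskP r (z1 i) (z3 i) (θ i) φ

/-- The rolling-disk Hamiltonian
`H = (α/2)(z_a − r(φ−φ_a) − z_d)² + (βr²/2)φ̇² + Σ (γᵢ/2)uᵢ² + δ
      + Σ λᵢθ̇ᵢ + Σ λ_{n+i}uᵢ + λ_{2n+1}φ̇ + λ_{2n+2}κ`, viewed as a function of the
control `u`; here `lam1 i = λᵢ`, `lam2 i = λ_{n+i}`, `lam3 = λ_{2n+1}`, `lam4 = λ_{2n+2}`,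
and `κ = N/D`. -/
noncomputable def diskHam {n : ℕ} (r g d2 F1 m0 t0 td0 u0 φ φd : ℝ) (z01 z03 : ℝ → ℝ)
    (m : Fin n → ℝ) (z1 z3 : Fin n → ℝ → ℝ) (θ θd : Fin n → ℝ)
    (α β δ za φa zd lam3 lam4 : ℝ) (γ lam1 lam2 : Fin n → ℝ) (u : Fin n → ℝ) : ℝ :=
  α / 2 * (za - r * (φ - φa) - zd) ^ 2 + β * r ^ 2 / 2 * φd ^ 2
    + (∑ j, γ j / 2 * u j ^ 2) + δ + (∑ j, lam1 j * θd j) + (∑ j, lam2 j * u j)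
    + lam3 * φd
    + lam4 * (diskN r g F1 m0 t0 td0 u0 φ φd z01 z03 m z1 z3 θ θd u
        / diskD r d2 m0 t0 φ z01 z03 m z1 z3 θ)

/-! The Hamiltonian is quadratic in `uᵢ`: the control enters `N` only through the affine term
`uᵢ ((r cos φ + ζ_{i,3}) ζ′_{i,1} − (r sin φ + ζ_{i,1}) ζ′_{i,3})` of `Kᵢ`, while `D` does not
depend on `u`. -/

theorem hasDerivAt_sum_update {ι : Type*} [Fintype ι] [DecidableEq ι] (f : ι → ℝ → ℝ)
    (u : ι → ℝ) (i : ι) {f' : ℝ} (hf : HasDerivAt (f i) f' (u i)) :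
    HasDerivAt (fun v => ∑ j, f j (Function.update u i v j)) f' (u i) := by
  have hsum : ∀ v, ∑ j, f j (Function.update u i v j)
      = f i v + ∑ j ∈ Finset.univ \ {i}, f j (u j) := fun v => by
    rw [funext (Function.apply_update f u i v), Finset.sum_update_of_mem (Finset.mem_univ i)]
  exact (hf.add_const _).congr_of_eventuallyEq (.of_forall hsum)

theorem diskK_eq_add_mul (r g : ℝ) (z1 z3 : ℝ → ℝ) (ti tdi ui φ φd : ℝ) :
    diskK r g z1 z3 ti tdi ui φ φd = diskK r g z1 z3 ti tdi 0 φ φd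
      + ui * ((r * Real.cos φ + z3 ti) * deriv z1 ti
        - (r * Real.sin φ + z1 ti) * deriv z3 ti) := by
  simp only [diskK]
  ring

theorem hasDerivAt_diskK_control (r g : ℝ) (z1 z3 : ℝ → ℝ) (ti tdi φ φd x : ℝ) :
    HasDerivAt (fun ui => diskK r g z1 z3 ti tdi ui φ φd)
      ((r * Real.cos φ + z3 ti) * deriv z1 ti - (r * Real.sin φ + z1 ti) * deriv z3 ti) x := by
  refine (((hasDerivAt_id x).mul_const _).const_add _).congr_of_eventuallyEq
    (.of_forall fun ui => diskK_eq_add_mul r g z1 z3 ti tdi ui φ φd) |>.congr_deriv ?_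
  exact one_mul _

theorem hasDerivAt_diskN_update {n : ℕ} (r g F1 m0 t0 td0 u0 φ φd : ℝ) (z01 z03 : ℝ → ℝ)
    (m : Fin n → ℝ) (z1 z3 : Fin n → ℝ → ℝ) (θ θd u : Fin n → ℝ) (i : Fin n) :
    HasDerivAt
      (fun v => diskN r g F1 m0 t0 td0 u0 φ φd z01 z03 m z1 z3 θ θd (Function.update u i v))
      (m i * ((r * Real.cos φ + z3 i (θ i)) * deriv (z1 i) (θ i)
        - (r * Real.sin φ + z1 i (θ i)) * deriv (z3 i) (θ i))) (u i) :=
  (hasDerivAt_sum_update (fun j v => m j * diskK r g (z1 j) (z3 j) (θ j) (θd j) v φ φd) u i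
    ((hasDerivAt_diskK_control ..).const_mul (m i))).const_add _

theorem stmt5_general {n : ℕ}
    (r g d2 F1 m0 t0 td0 u0 φ φd : ℝ) (z01 z03 : ℝ → ℝ)
    (m : Fin n → ℝ) (z1 z3 : Fin n → ℝ → ℝ) (θ θd u : Fin n → ℝ)
    (α β δ za φa zd lam3 lam4 : ℝ) (γ lam1 lam2 : Fin n → ℝ)
    (i : Fin n) :
    HasDerivAt
      (fun v : ℝ =>
        diskHam r g d2 F1 m0 t0 td0 u0 φ φd z01 z03 m z1 z3 θ θd
          α β δ za φa zd lam3 lam4 γ lam1 lam2 (Function.update u i v))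
      (γ i * u i + lam2 i
        + lam4 * (m i * ((r * Real.cos φ + z3 i (θ i)) * deriv (z1 i) (θ i)
              - (r * Real.sin φ + z1 i (θ i)) * deriv (z3 i) (θ i))
            / diskD r d2 m0 t0 φ z01 z03 m z1 z3 θ))
      (u i) := by
  have hquad := hasDerivAt_sum_update (fun j v => γ j / 2 * v ^ 2) u i
    ((hasDerivAt_pow 2 (u i)).const_mul (γ i / 2))
  have hlin := hasDerivAt_sum_update (fun j v => lam2 j * v) u i
    ((hasDerivAt_id (u i)).const_mul (lam2 i))
  have hκ := ((hasDerivAt_diskN_update r g F1 m0 t0 td0 u0 φ φd z01 z03 m z1 z3 θ θd u i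
    ).div_const (diskD r d2 m0 t0 φ z01 z03 m z1 z3 θ)).const_mul lam4
  refine ((((((hquad.const_add _).add_const δ).add_const _).add hlin).add_const _).add hκ
    ).congr_deriv ?_
  simp only [Nat.cast_ofNat]
  ring

/-- For the disk Hamiltonian, the partial derivative with respect to the
control component `uᵢ` (`1 ≤ i ≤ n`) equals
`γᵢuᵢ + λ_{n+i} + λ_{2n+2}·mᵢ[(r cos φ + ζ_{i,3})ζ′_{i,1} − (r sin φ + ζ_{i,1})ζ′_{i,3}]/D`. -/
theorem stmt5 {n : ℕ}
    (r g d2 F1 m0 t0 td0 u0 φ φd : ℝ) (z01 z03 : ℝ → ℝ)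
    (m : Fin n → ℝ) (z1 z3 : Fin n → ℝ → ℝ) (θ θd u : Fin n → ℝ)
    (α β δ za φa zd lam3 lam4 : ℝ) (γ lam1 lam2 : Fin n → ℝ)
    (hz01 : ∀ x y, z01 x = z01 y) (hz03 : ∀ x y, z03 x = z03 y)
    (htd0 : td0 = 0) (hu0 : u0 = 0)
    (hz1 : ∀ i, ContDiff ℝ 3 (z1 i)) (hz3 : ∀ i, ContDiff ℝ 3 (z3 i))
    (hD : diskD r d2 m0 t0 φ z01 z03 m z1 z3 θ ≠ 0)
    (i : Fin n) :
    HasDerivAt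
      (fun v : ℝ =>
        diskHam r g d2 F1 m0 t0 td0 u0 φ φd z01 z03 m z1 z3 θ θd
          α β δ za φa zd lam3 lam4 γ lam1 lam2 (Function.update u i v))
      (γ i * u i + lam2 i
        + lam4 * (m i * ((r * Real.cos φ + z3 i (θ i)) * deriv (z1 i) (θ i)
              - (r * Real.sin φ + z1 i (θ i)) * deriv (z3 i) (θ i))
            / diskD r d2 m0 t0 φ z01 z03 m z1 z3 θ))
      (u i) :=
  stmt5_general r g d2 F1 m0 t0 td0 u0 φ φd z01 z03 m z1 z3 θ θd u α β δ za φa zd lam3 lam4 γ lam1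
    lam2 i
end

section
/- Assume γᵢ > 0 for all 1 ≤ i ≤ n. Then the gradient of the disk Hamiltonian H = (α/2)(z_a − r(φ − φ_a) − z_d)² + (βr²/2)φ̇² + Σ_{i=1}^n (γᵢ/2)uᵢ² + δ + Σ_{i=1}^n λᵢθ̇ᵢ + Σ_{i=1}^n λ_{n+i}uᵢ + λ_{2n+1}φ̇ + λ_{2n+2}κ with respect to the control u vanishes if and only if, for every 1 ≤ i ≤ n, uᵢ = −γᵢ⁻¹{λ_{n+i} + λ_{2n+2}·mᵢ[(r cos φ + ζ_{i,3}(θᵢ))ζ′_{i,1}(θᵢ) − (r sin φ + ζ_{i,1}(θᵢ))ζ′_{i,3}(θᵢ)]/D}. -/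
/-!
In the control `u` the Hamiltonian is a separable quadratic: `D` does not involve `u`, and each
`Kᵢ` is affine in `uᵢ` with slope `(r cos φ + ζ_{i,3})ζ′_{i,1} − (r sin φ + ζ_{i,1})ζ′_{i,3}`, so
`H(u) = H(0) + Σᵢ (γᵢ/2 · uᵢ² + cᵢ uᵢ)` with `cᵢ` the bracket of the claimed formula. The gradient
therefore has components `γᵢuᵢ + cᵢ`, which vanish exactly when `uᵢ = −γᵢ⁻¹cᵢ`.
-/

open Finset

section SeparableQuadratic

variable {ι : Type*} [Fintype ι]

theorem hasFDerivAt_sum_quadratic (a b : ι → ℝ) (u : ι → ℝ) :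
    HasFDerivAt (fun v : ι → ℝ => ∑ j, (a j / 2 * v j ^ 2 + b j * v j))
      (∑ j, (a j * u j + b j) • ContinuousLinearMap.proj (R := ℝ) (φ := fun _ : ι => ℝ) j) u := by
  refine HasFDerivAt.fun_sum fun j _ => ?_
  have hq : HasDerivAt (fun t : ℝ => a j / 2 * t ^ 2 + b j * t) (a j * u j + b j) (u j) := by
    refine (((hasDerivAt_pow 2 _).const_mul _).add ((hasDerivAt_id _).const_mul _)).congr_deriv ?_
    norm_num
    ring
  exact hq.comp_hasFDerivAt u (hasFDerivAt_apply (𝕜 := ℝ) j u)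

theorem sum_smul_proj_eq_zero_iff {R : Type*} [DecidableEq ι] [CommSemiring R]
    [TopologicalSpace R] [IsTopologicalSemiring R] (w : ι → R) :
    (∑ j, w j • ContinuousLinearMap.proj (R := R) (φ := fun _ : ι => R) j) = 0 ↔ ∀ j, w j = 0 := by
  refine ⟨fun h i => ?_, fun h => ?_⟩
  · simpa [Pi.single_apply] using congrArg (fun L => L (Pi.single i 1)) h
  · ext; simp [h]

theorem fderiv_const_add_sum_quadratic_eq_zero_iff (C : ℝ) (a b u : ι → ℝ) :
    fderiv ℝ (fun v : ι → ℝ => C + ∑ j, (a j / 2 * v j ^ 2 + b j * v j)) u = 0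
      ↔ ∀ j, a j * u j + b j = 0 := by
  classical
  rw [((hasFDerivAt_sum_quadratic a b u).const_add C).fderiv, sum_smul_proj_eq_zero_iff]

end SeparableQuadratic

theorem mul_add_eq_zero_iff_eq_neg_inv_mul {K : Type*} [Field K] {a b x : K} (ha : a ≠ 0) :
    a * x + b = 0 ↔ x = -a⁻¹ * b := by
  rw [add_eq_zero_iff_eq_neg, neg_mul, ← mul_neg, eq_inv_mul_iff_mul_eq₀ ha]

theorem diskHam_eq_add_sum {n : ℕ} (r g d2 F1 m0 t0 td0 u0 φ φd : ℝ) (z01 z03 : ℝ → ℝ)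
    (m : Fin n → ℝ) (z1 z3 : Fin n → ℝ → ℝ) (θ θd : Fin n → ℝ)
    (α β δ za φa zd lam3 lam4 : ℝ) (γ lam1 lam2 : Fin n → ℝ) :
    diskHam r g d2 F1 m0 t0 td0 u0 φ φd z01 z03 m z1 z3 θ θd α β δ za φa zd lam3 lam4 γ lam1 lam2
      = fun v => diskHam r g d2 F1 m0 t0 td0 u0 φ φd z01 z03 m z1 z3 θ θd
            α β δ za φa zd lam3 lam4 γ lam1 lam2 0
          + ∑ j, (γ j / 2 * v j ^ 2
            + (lam2 j + lam4 * (m j * ((r * Real.cos φ + z3 j (θ j)) * deriv (z1 j) (θ j)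
                - (r * Real.sin φ + z1 j (θ j)) * deriv (z3 j) (θ j))
              / diskD r d2 m0 t0 φ z01 z03 m z1 z3 θ)) * v j) := by
  funext v
  set D := diskD r d2 m0 t0 φ z01 z03 m z1 z3 θ
  set k : Fin n → ℝ := fun j => (r * Real.cos φ + z3 j (θ j)) * deriv (z1 j) (θ j)
    - (r * Real.sin φ + z1 j (θ j)) * deriv (z3 j) (θ j)
  have hN : diskN r g F1 m0 t0 td0 u0 φ φd z01 z03 m z1 z3 θ θd v
      = diskN r g F1 m0 t0 td0 u0 φ φd z01 z03 m z1 z3 θ θd 0 + ∑ j, m j * k j * v j := by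
    simp only [diskN, Pi.zero_apply, add_assoc, ← sum_add_distrib]
    refine congrArg (fun s => _ + (_ + s)) (sum_congr rfl fun j _ => ?_)
    rw [diskK_eq_add_mul _ _ _ _ _ _ (v j)]
    ring
  have hsum : ∑ j, (γ j / 2 * v j ^ 2 + (lam2 j + lam4 * (m j * k j / D)) * v j)
      = ∑ j, γ j / 2 * v j ^ 2 + ∑ j, lam2 j * v j + lam4 * (∑ j, m j * k j * v j) / D := by
    rw [mul_sum, sum_div, ← sum_add_distrib, ← sum_add_distrib]
    exact sum_congr rfl fun j _ => by ring
  rw [hsum]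
  simp only [diskHam, hN, Pi.zero_apply, ne_eq, OfNat.ofNat_ne_zero, not_false_eq_true, zero_pow,
    mul_zero, sum_const_zero]
  ring

theorem stmt7_general {n : ℕ}
    (r g d2 F1 m0 t0 td0 u0 φ φd : ℝ) (z01 z03 : ℝ → ℝ)
    (m : Fin n → ℝ) (z1 z3 : Fin n → ℝ → ℝ) (θ θd u : Fin n → ℝ)
    (α β δ za φa zd lam3 lam4 : ℝ) (γ lam1 lam2 : Fin n → ℝ)
    (hγ : ∀ i, 0 < γ i) :
    fderiv ℝ
        (diskHam r g d2 F1 m0 t0 td0 u0 φ φd z01 z03 m z1 z3 θ θd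
          α β δ za φa zd lam3 lam4 γ lam1 lam2) u = 0
      ↔ ∀ i : Fin n,
          u i = -(γ i)⁻¹ *
            (lam2 i
              + lam4 * (m i * ((r * Real.cos φ + z3 i (θ i)) * deriv (z1 i) (θ i)
                    - (r * Real.sin φ + z1 i (θ i)) * deriv (z3 i) (θ i))
                  / diskD r d2 m0 t0 φ z01 z03 m z1 z3 θ)) := by
  rw [diskHam_eq_add_sum, fderiv_const_add_sum_quadratic_eq_zero_iff]
  exact forall_congr' fun i => mul_add_eq_zero_iff_eq_neg_inv_mul (hγ i).ne'

/-- Assume `γᵢ > 0` for all `i`. Then the gradient of the disk Hamiltonian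
with respect to the control `u` vanishes iff, for every `i`,
`uᵢ = −γᵢ⁻¹{λ_{n+i} + λ_{2n+2}·mᵢ[(r cos φ + ζ_{i,3})ζ′_{i,1} − (r sin φ + ζ_{i,1})ζ′_{i,3}]/D}`. -/
theorem stmt7 {n : ℕ}
    (r g d2 F1 m0 t0 td0 u0 φ φd : ℝ) (z01 z03 : ℝ → ℝ)
    (m : Fin n → ℝ) (z1 z3 : Fin n → ℝ → ℝ) (θ θd u : Fin n → ℝ)
    (α β δ za φa zd lam3 lam4 : ℝ) (γ lam1 lam2 : Fin n → ℝ)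
    (hz01 : ∀ x y, z01 x = z01 y) (hz03 : ∀ x y, z03 x = z03 y)
    (htd0 : td0 = 0) (hu0 : u0 = 0)
    (hz1 : ∀ i, ContDiff ℝ 3 (z1 i)) (hz3 : ∀ i, ContDiff ℝ 3 (z3 i))
    (hD : diskD r d2 m0 t0 φ z01 z03 m z1 z3 θ ≠ 0)
    (hγ : ∀ i, 0 < γ i) :
    fderiv ℝ
        (diskHam r g d2 F1 m0 t0 td0 u0 φ φd z01 z03 m z1 z3 θ θd
          α β δ za φa zd lam3 lam4 γ lam1 lam2) u = 0
      ↔ ∀ i : Fin n,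
          u i = -(γ i)⁻¹ *
            (lam2 i
              + lam4 * (m i * ((r * Real.cos φ + z3 i (θ i)) * deriv (z1 i) (θ i)
                    - (r * Real.sin φ + z1 i (θ i)) * deriv (z3 i) (θ i))
                  / diskD r d2 m0 t0 φ z01 z03 m z1 z3 θ)) :=
  stmt7_general r g d2 F1 m0 t0 td0 u0 φ φd z01 z03 m z1 z3 θ θd u α β δ za φa zd lam3 lam4 γ lam1
    lam2 hγ
end
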